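/- Let k be a field and x, y ∈ k² with ω(x,y) = 1. For every λ ∈ kˣ there is a unique pair (x₁, y₁) ∈ k² × k² satisfying y₁ = λ·x₁, ω(x₁, x) = 1 and ω(y₁, y) = 1, namely x₁ = λ⁻¹·x − y and y₁ = x − λ·y. Consequently, the map λ ↦ (λ⁻¹·x − y, x − λ·y) is a bijection from kˣ onto the set Z_{x,y} = {(x₁, y₁) ∈ k² × k² : there exists λ ∈ kˣ with y₁ = λ·x₁, and ω(x₁, x) = 1, ω(y₁, y) = 1}. (This is the computation in the proof of the paper's Proposition on Φ_{w,w} f*(𝓛) for G = SL₂: for (x,y) off the variety Δ̃, the restriction of f to Z_{x,y} is an isomorphism onto 𝔾_m.) -/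

import Mathlib

/-!
Since `ω(x, y) = 1`, the pair `x, y` is a symplectic basis of `k²`, and every vector is recovered
from its pairings with it: `v = ω(v, y) • x - ω(v, x) • y`. If `y₁ = λ • x₁` with `ω(x₁, x) = 1`
and `ω(y₁, y) = 1`, then `ω(y₁, x) = λ`, so the expansion forces `y₁ = x - λ • y` and
`x₁ = λ⁻¹ • x - y`; conversely this pair satisfies the three conditions by bilinearity.
Injectivity of `λ ↦ x - λ • y` holds because `y ≠ 0`.
-/

/-- The standard symplectic form on `k²`: `ω(x,y) = x₁y₂ − x₂y₁`. -/
def sympForm {k : Type*} [Field k] (x y : Fin 2 → k) : k :=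
  x 0 * y 1 - x 1 * y 0

section SympForm

variable {k : Type*} [Field k]

theorem sympForm_smul_left (c : k) (u v : Fin 2 → k) :
    sympForm (c • u) v = c * sympForm u v := by
  simp only [sympForm, Pi.smul_apply, smul_eq_mul]
  ring

theorem sympForm_sub_left (u u' v : Fin 2 → k) :
    sympForm (u - u') v = sympForm u v - sympForm u' v := by
  simp only [sympForm, Pi.sub_apply]
  ring

theorem sympForm_self (u : Fin 2 → k) : sympForm u u = 0 := by
  simp only [sympForm]
  ring

theorem sympForm_swap (u v : Fin 2 → k) : sympForm v u = -sympForm u v := by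
  simp only [sympForm]
  ring

theorem eq_sympForm_smul_sub_sympForm_smul {x y : Fin 2 → k} (hxy : sympForm x y = 1)
    (v : Fin 2 → k) : v = sympForm v y • x - sympForm v x • y := by
  simp only [sympForm] at hxy ⊢
  funext i
  fin_cases i <;> simp only [Pi.sub_apply, Pi.smul_apply, smul_eq_mul, Fin.zero_eta,
    Fin.mk_one] <;> linear_combination (-v _) * hxy

theorem ne_zero_right_of_sympForm_eq_one {x y : Fin 2 → k} (hxy : sympForm x y = 1) :
    y ≠ 0 := by
  rintro rfl
  simp [sympForm] at hxy

theorem fiber_iff_eq {x y : Fin 2 → k} (hxy : sympForm x y = 1) (l : kˣ)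
    (p : (Fin 2 → k) × (Fin 2 → k)) :
    (p.2 = (l : k) • p.1 ∧ sympForm p.1 x = 1 ∧ sympForm p.2 y = 1) ↔
      p = (((l⁻¹ : kˣ) : k) • x - y, x - (l : k) • y) := by
  constructor
  · rintro ⟨h₁, h₂, h₃⟩
    have hx : sympForm p.2 x = l := by rw [h₁, sympForm_smul_left, h₂, mul_one]
    have hy₁ : p.2 = x - (l : k) • y := by
      rw [eq_sympForm_smul_sub_sympForm_smul hxy p.2, h₃, hx, one_smul]
    have hx₁ : p.1 = ((l⁻¹ : kˣ) : k) • x - y := by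
      have : p.1 = ((l⁻¹ : kˣ) : k) • p.2 := by rw [h₁, smul_smul, Units.inv_mul, one_smul]
      rw [this, hy₁, smul_sub, smul_smul, Units.inv_mul, one_smul]
    exact Prod.ext hx₁ hy₁
  · rintro rfl
    refine ⟨?_, ?_, ?_⟩
    · rw [smul_sub, smul_smul, Units.mul_inv, one_smul]
    · rw [sympForm_sub_left, sympForm_smul_left, sympForm_self, mul_zero, zero_sub,
        sympForm_swap, neg_neg, hxy]
    · rw [sympForm_sub_left, sympForm_smul_left, sympForm_self, mul_zero, sub_zero, hxy]

end SympForm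

/-- Let `ω(x,y) = 1`. For every `λ ∈ kˣ` there is a unique pair `(x₁,y₁)`
with `y₁ = λ·x₁`, `ω(x₁,x) = 1` and `ω(y₁,y) = 1`, namely
`x₁ = λ⁻¹·x − y`, `y₁ = x − λ·y`; consequently
`λ ↦ (λ⁻¹·x − y, x − λ·y)` is a bijection from `kˣ` onto
`Z_{x,y} = {(x₁,y₁) : ∃ λ ∈ kˣ, y₁ = λ·x₁, ω(x₁,x) = 1, ω(y₁,y) = 1}`. -/
theorem off_diagonal_fiber_is_Gm {k : Type*} [Field k]
    (x y : Fin 2 → k) (hxy : sympForm x y = 1) :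
    (∀ l : kˣ, ∀ p : (Fin 2 → k) × (Fin 2 → k),
      (p.2 = (l : k) • p.1 ∧ sympForm p.1 x = 1 ∧ sympForm p.2 y = 1) ↔
        p = (((l⁻¹ : kˣ) : k) • x - y, x - (l : k) • y)) ∧
    Set.BijOn (fun l : kˣ => ((((l⁻¹ : kˣ) : k) • x - y, x - (l : k) • y) :
        (Fin 2 → k) × (Fin 2 → k)))
      Set.univ
      {p : (Fin 2 → k) × (Fin 2 → k) | ∃ l : kˣ,
        p.2 = (l : k) • p.1 ∧ sympForm p.1 x = 1 ∧ sympForm p.2 y = 1} := by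
  refine ⟨fiber_iff_eq hxy, fun l _ => ⟨l, (fiber_iff_eq hxy l _).2 rfl⟩, ?_, ?_⟩
  · intro l _ l' _ h
    have hsnd : (l : k) • y = (l' : k) • y := sub_right_injective (congrArg Prod.snd h)
    exact Units.ext (smul_left_injective k (ne_zero_right_of_sympForm_eq_one hxy) hsnd)
  · rintro p ⟨l, hp⟩
    exact ⟨l, Set.mem_univ l, ((fiber_iff_eq hxy l p).1 hp).symm⟩
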